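/- (Entropy of the estimator under covariance mismatch.) In the setup of the context, suppose ‖Σ̂ − Σ‖ ≤ (δ/4^{K+1})·χ for some constant δ ∈ (0,1). Then for every k = 1,…,K the matrix Σ_k has rank s, and, writing Vol(Σ_k) for the square root of the product of the s positive eigenvalues of Σ_k, the posterior entropy H_k := ln[(2πe)^{s/2} Vol(Σ_k)] satisfies H_k ≤ (s/2)·{ ln[2πe·tr(Σ)] − Σ_{j=1}^{k} ln(1/f_j) }, where f_j = 1 − ((1−δ)/s)·(β_j λ̂_j/(β_j λ̂_j + σ²)) ∈ (0,1). -/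

import Mathlib

/-!
Both covariances are updated by the same rank-one Kalman step along `a_k`, so the mismatch
`Σ̂_k - Σ_k` changes only by rank-one terms whose size is controlled by `‖Σ̂_{k-1} - Σ_{k-1}‖`.
For the Info-Greedy power, which satisfies `β λ̂² = (λ̂ - χ)(β λ̂ + σ²)`, these terms add up to at
most three times the old mismatch, so `‖Σ̂_k - Σ_k‖ ≤ 4^k δχ / 4^{K+1}`, which is at most `δχ/16`
before each step. Hence `a_kᵀ Σ_{k-1} a_k` is close to `β_k λ̂_k`, every eigenvalue of `Σ_{k-1}` is
at most `λ̂_k + δχ/16`, and by Cauchy–Schwarz the step removes at least the fraction `1 - f_k` of the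
trace of the rank-`s` matrix `Σ_{k-1}`. A Kalman step keeps a positive semidefinite matrix positive
semidefinite with the same kernel, so `Σ_k` has rank `s`, and the product of its `s` nonzero
eigenvalues is at most `(tr Σ_k)^s ≤ (f_1 ⋯ f_k tr Σ)^s`.
-/
open MeasureTheory ProbabilityTheory Matrix BigOperators

/-- Spectral (ℓ²-operator) norm of a real square matrix. -/
noncomputable def specNorm {n : ℕ} (A : Matrix (Fin n) (Fin n) ℝ) : ℝ :=
  ‖LinearMap.toContinuousLinearMap (Matrix.toEuclideanLin A)‖

/-- The standard Gaussian measure on `ℝⁿ` (iid `N(0,1)` coordinates). -/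
noncomputable def stdGaussianPi (n : ℕ) : Measure (Fin n → ℝ) :=
  Measure.pi fun _ => gaussianReal 0 1

/-- The square root of a positive semidefinite matrix, as `Matrix.PosSemidef.sqrt` was defined in
the older Mathlib: `U * diagonal (√ ∘ eigenvalues) * Uᴴ` with `U` the eigenvector unitary. -/
noncomputable def Matrix.PosSemidef.sqrt {n : ℕ} {S : Matrix (Fin n) (Fin n) ℝ}
    (hS : S.PosSemidef) : Matrix (Fin n) (Fin n) ℝ :=
  (hS.1.eigenvectorUnitary : Matrix (Fin n) (Fin n) ℝ) *
    diagonal ((↑) ∘ (√·) ∘ hS.1.eigenvalues) *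
    (star hS.1.eigenvectorUnitary : Matrix (Fin n) (Fin n) ℝ)

/-- The multivariate Gaussian measure `N(μ, S)` on `ℝⁿ`, defined as the pushforward of the
standard Gaussian under the affine map `z ↦ μ + S^{1/2} z`. -/
noncomputable def multiGaussian {n : ℕ} (μ : Fin n → ℝ) (S : Matrix (Fin n) (Fin n) ℝ)
    (hS : S.PosSemidef) : Measure (Fin n → ℝ) :=
  (stdGaussianPi n).map fun z => μ + hS.sqrt.mulVec z

/-- The chi-squared distribution with `n` degrees of freedom, i.e. the Gamma distribution
with shape `n/2` and rate `1/2`. -/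
noncomputable def chiSqMeasure (n : ℕ) : Measure ℝ := gammaMeasure ((n : ℝ) / 2) (1 / 2)

open WithLp

section SpecNorm

variable {n : ℕ}

lemma specNorm_add_le (A B : Matrix (Fin n) (Fin n) ℝ) :
    specNorm (A + B) ≤ specNorm A + specNorm B := by
  simpa only [specNorm, map_add] using norm_add_le _ _

lemma specNorm_smul (c : ℝ) (A : Matrix (Fin n) (Fin n) ℝ) :
    specNorm (c • A) = |c| * specNorm A := by
  simp only [specNorm, map_smul, norm_smul, Real.norm_eq_abs]

lemma norm_toLp_mulVec_le_specNorm (A : Matrix (Fin n) (Fin n) ℝ) (x : Fin n → ℝ) :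
    ‖toLp 2 (A *ᵥ x)‖ ≤ specNorm A * ‖toLp 2 x‖ :=
  (toEuclideanCLM (𝕜 := ℝ) A).le_opNorm (toLp 2 x)

lemma abs_dotProduct_mulVec_le_specNorm (A : Matrix (Fin n) (Fin n) ℝ) (x : Fin n → ℝ) :
    |x ⬝ᵥ A *ᵥ x| ≤ specNorm A * ‖toLp 2 x‖ ^ 2 := by
  have hinner : x ⬝ᵥ A *ᵥ x = inner ℝ (toLp 2 x) (toLp 2 (A *ᵥ x)) := by
    rw [EuclideanSpace.inner_toLp_toLp, star_trivial, dotProduct_comm]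
  calc |x ⬝ᵥ A *ᵥ x| ≤ ‖toLp 2 x‖ * ‖toLp 2 (A *ᵥ x)‖ := hinner ▸ abs_real_inner_le_norm _ _
    _ ≤ ‖toLp 2 x‖ * (specNorm A * ‖toLp 2 x‖) := by gcongr; exact norm_toLp_mulVec_le_specNorm A x
    _ = specNorm A * ‖toLp 2 x‖ ^ 2 := by ring

lemma toEuclideanCLM_vecMulVec (x y : Fin n → ℝ) :
    toEuclideanCLM (𝕜 := ℝ) (vecMulVec x y)
      = InnerProductSpace.rankOne ℝ (toLp 2 x) (toLp 2 y) := by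
  ext z i
  simp [vecMulVec_mulVec, EuclideanSpace.inner_eq_star_dotProduct, dotProduct_comm y, mul_comm]

lemma specNorm_vecMulVec (x y : Fin n → ℝ) :
    specNorm (vecMulVec x y) = ‖toLp 2 x‖ * ‖toLp 2 y‖ := by
  rw [specNorm, ← InnerProductSpace.norm_rankOne (𝕜 := ℝ), ← toEuclideanCLM_vecMulVec]
  rfl

end SpecNorm

section KalmanUpdate

variable {ι : Type*} [Fintype ι]

lemma norm_toLp_sq (x : ι → ℝ) : ‖toLp 2 x‖ ^ 2 = x ⬝ᵥ x := by
  rw [← real_inner_self_eq_norm_sq, EuclideanSpace.inner_toLp_toLp, star_trivial]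

lemma dotProduct_sq_le (x y : ι → ℝ) : (x ⬝ᵥ y) ^ 2 ≤ (x ⬝ᵥ x) * (y ⬝ᵥ y) := by
  simpa only [dotProduct, sq] using Finset.sum_mul_sq_le_sq_mul_sq Finset.univ x y

lemma Matrix.IsHermitian.vecMul_eq_mulVec {M : Matrix ι ι ℝ} (hM : M.IsHermitian) (x : ι → ℝ) :
    x ᵥ* M = M *ᵥ x := by
  rw [← vecMul_transpose, ← conjTranspose_eq_transpose_of_trivial, hM]

lemma Matrix.rank_eq_of_mulVec_eq_zero_iff {A B : Matrix ι ι ℝ}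
    (h : ∀ x, A *ᵥ x = 0 ↔ B *ᵥ x = 0) : A.rank = B.rank := by
  have hker : LinearMap.ker A.mulVecLin = LinearMap.ker B.mulVecLin := by
    ext x
    exact h x
  have hA := LinearMap.finrank_range_add_finrank_ker A.mulVecLin
  have hB := LinearMap.finrank_range_add_finrank_ker B.mulVecLin
  rw [hker] at hA
  unfold Matrix.rank
  omega

/-- The covariance of `x ~ N(0, M)` conditioned on a measurement of `a ⬝ᵥ x` with noise variance
`c`. -/
noncomputable def kalmanUpdate (M : Matrix ι ι ℝ) (a : ι → ℝ) (c : ℝ) : Matrix ι ι ℝ :=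
  M - (a ⬝ᵥ M *ᵥ a + c)⁻¹ • vecMulVec (M *ᵥ a) (a ᵥ* M)

variable {M : Matrix ι ι ℝ} {a : ι → ℝ} {c : ℝ}

lemma dotProduct_kalmanUpdate_mulVec (x : ι → ℝ) :
    x ⬝ᵥ kalmanUpdate M a c *ᵥ x
      = x ⬝ᵥ M *ᵥ x - (a ⬝ᵥ M *ᵥ a + c)⁻¹ * ((x ⬝ᵥ M *ᵥ a) * (a ⬝ᵥ M *ᵥ x)) := by
  rw [kalmanUpdate, sub_mulVec, smul_mulVec, vecMulVec_mulVec, op_smul_eq_smul,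
    ← dotProduct_mulVec, dotProduct_sub, dotProduct_smul, dotProduct_smul, smul_eq_mul,
    smul_eq_mul, mul_comm (x ⬝ᵥ M *ᵥ a)]

lemma isHermitian_kalmanUpdate (hM : M.IsHermitian) : (kalmanUpdate M a c).IsHermitian := by
  have hv : (vecMulVec (M *ᵥ a) (M *ᵥ a)).IsHermitian := by
    simpa using (posSemidef_vecMulVec_self_star (M *ᵥ a)).isHermitian
  rw [kalmanUpdate, hM.vecMul_eq_mulVec]
  exact hM.sub (hv.smul (IsSelfAdjoint.all _))

lemma trace_kalmanUpdate (hM : M.IsHermitian) :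
    (kalmanUpdate M a c).trace = M.trace - (a ⬝ᵥ M *ᵥ a + c)⁻¹ * ((M *ᵥ a) ⬝ᵥ (M *ᵥ a)) := by
  rw [kalmanUpdate, trace_sub, trace_smul, trace_vecMulVec, hM.vecMul_eq_mulVec, smul_eq_mul]

lemma le_dotProduct_kalmanUpdate_mulVec (hM : M.PosSemidef) (hc : 0 < c) (x : ι → ℝ) :
    c / (a ⬝ᵥ M *ᵥ a + c) * (x ⬝ᵥ M *ᵥ x) ≤ x ⬝ᵥ kalmanUpdate M a c *ᵥ x := by
  have hnonneg (y : ι → ℝ) : 0 ≤ y ⬝ᵥ M *ᵥ y := by simpa using hM.dotProduct_mulVec_nonneg y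
  have hcs : (x ⬝ᵥ M *ᵥ a) * (a ⬝ᵥ M *ᵥ x) ≤ (a ⬝ᵥ M *ᵥ a) * (x ⬝ᵥ M *ᵥ x) := by
    classical
    simpa only [toLinearMap₂'_apply', mul_comm (x ⬝ᵥ M *ᵥ a)] using
      LinearMap.BilinForm.apply_mul_apply_le_of_forall_zero_le (toLinearMap₂' ℝ M)
        (fun y => by rw [toLinearMap₂'_apply']; exact hnonneg y) a x
  have hden : 0 < a ⬝ᵥ M *ᵥ a + c := by linarith [hnonneg a]
  have hsub := mul_le_mul_of_nonneg_left hcs (inv_nonneg.2 hden.le)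
  have hrw : c / (a ⬝ᵥ M *ᵥ a + c) * (x ⬝ᵥ M *ᵥ x)
      = x ⬝ᵥ M *ᵥ x - (a ⬝ᵥ M *ᵥ a + c)⁻¹ * ((a ⬝ᵥ M *ᵥ a) * (x ⬝ᵥ M *ᵥ x)) := by
    field_simp
    ring
  rw [dotProduct_kalmanUpdate_mulVec, hrw]
  linarith

lemma posSemidef_kalmanUpdate (hM : M.PosSemidef) (hc : 0 < c) :
    (kalmanUpdate M a c).PosSemidef := by
  refine .of_dotProduct_mulVec_nonneg (isHermitian_kalmanUpdate hM.isHermitian) fun x => ?_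
  have hden : 0 < a ⬝ᵥ M *ᵥ a + c := by
    linarith [show 0 ≤ a ⬝ᵥ M *ᵥ a by simpa using hM.dotProduct_mulVec_nonneg a]
  simpa using (mul_nonneg (div_pos hc hden).le (by simpa using hM.dotProduct_mulVec_nonneg x)).trans
    (le_dotProduct_kalmanUpdate_mulVec hM hc x)

lemma kalmanUpdate_mulVec_eq_zero_iff (hM : M.PosSemidef) (hc : 0 < c) (x : ι → ℝ) :
    kalmanUpdate M a c *ᵥ x = 0 ↔ M *ᵥ x = 0 := by
  constructor
  · intro hx
    have hden : 0 < a ⬝ᵥ M *ᵥ a + c := by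
      linarith [show 0 ≤ a ⬝ᵥ M *ᵥ a by simpa using hM.dotProduct_mulVec_nonneg a]
    have hle := le_dotProduct_kalmanUpdate_mulVec (a := a) hM hc x
    rw [hx, dotProduct_zero] at hle
    have hMx : x ⬝ᵥ M *ᵥ x = 0 := le_antisymm (nonpos_of_mul_nonpos_right hle (div_pos hc hden))
      (by simpa using hM.dotProduct_mulVec_nonneg x)
    simpa using (hM.dotProduct_mulVec_zero_iff x).1 (by simpa using hMx)
  · intro hx
    rw [kalmanUpdate, sub_mulVec, smul_mulVec, vecMulVec_mulVec, ← dotProduct_mulVec, hx]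
    simp

lemma rank_kalmanUpdate (hM : M.PosSemidef) (hc : 0 < c) : (kalmanUpdate M a c).rank = M.rank :=
  rank_eq_of_mulVec_eq_zero_iff (kalmanUpdate_mulVec_eq_zero_iff hM hc)

lemma kalmanUpdate_sub_kalmanUpdate {A : Matrix ι ι ℝ} (hA : A.IsHermitian) (hM : M.IsHermitian)
    {e : ι → ℝ} {lam : ℝ} (hAa : A *ᵥ a = lam • a) (hMa : M *ᵥ a = lam • a - e) :
    kalmanUpdate A a c - kalmanUpdate M a c = (A - M)
      + ((a ⬝ᵥ M *ᵥ a + c)⁻¹ - (a ⬝ᵥ A *ᵥ a + c)⁻¹) • (lam ^ 2 • vecMulVec a a)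
      + (a ⬝ᵥ M *ᵥ a + c)⁻¹ • (vecMulVec e e - lam • (vecMulVec a e + vecMulVec e a)) := by
  unfold kalmanUpdate
  generalize a ⬝ᵥ A *ᵥ a = p
  generalize a ⬝ᵥ M *ᵥ a = q
  rw [hA.vecMul_eq_mulVec, hM.vecMul_eq_mulVec, hAa, hMa]
  ext i j
  simp only [Matrix.sub_apply, Matrix.add_apply, Matrix.smul_apply, vecMulVec_apply,
    Pi.sub_apply, Pi.smul_apply, smul_eq_mul]
  ring

end KalmanUpdate

lemma specNorm_kalmanUpdate_sub_le {n : ℕ} {A M : Matrix (Fin n) (Fin n) ℝ} (hA : A.IsHermitian)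
    (hM : M.PosSemidef) {a : Fin n → ℝ} {lam c ε : ℝ} (hAa : A *ᵥ a = lam • a) (hlam : 0 ≤ lam)
    (hc : 0 ≤ c) (hAM : specNorm (A - M) ≤ ε) :
    specNorm (kalmanUpdate A a c - kalmanUpdate M a c)
      ≤ ε + |(a ⬝ᵥ M *ᵥ a + c)⁻¹ - (a ⬝ᵥ A *ᵥ a + c)⁻¹| * lam ^ 2 * ‖toLp 2 a‖ ^ 2
        + (a ⬝ᵥ M *ᵥ a + c)⁻¹ * (2 * lam * ε + ε ^ 2) * ‖toLp 2 a‖ ^ 2 := by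
  set e := (A - M) *ᵥ a
  have hMa : M *ᵥ a = lam • a - e := by simp only [e, sub_mulVec, hAa, sub_sub_cancel]
  have hden : 0 ≤ (a ⬝ᵥ M *ᵥ a + c)⁻¹ := by
    have := hM.dotProduct_mulVec_nonneg a
    simp only [star_trivial] at this
    positivity
  have he : ‖toLp 2 e‖ ≤ ε * ‖toLp 2 a‖ :=
    (norm_toLp_mulVec_le_specNorm _ a).trans (by gcongr)
  have hε : 0 ≤ ε := (norm_nonneg _).trans hAM
  have hrank1 : specNorm (vecMulVec e e - lam • (vecMulVec a e + vecMulVec e a))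
      ≤ (2 * lam * ε + ε ^ 2) * ‖toLp 2 a‖ ^ 2 := by
    calc _ ≤ specNorm (vecMulVec e e)
          + |-lam| * (specNorm (vecMulVec a e) + specNorm (vecMulVec e a)) := by
          rw [sub_eq_add_neg, ← neg_smul]
          refine (specNorm_add_le _ _).trans ?_
          rw [specNorm_smul]
          gcongr
          exact specNorm_add_le _ _
      _ = ‖toLp 2 e‖ ^ 2 + 2 * lam * (‖toLp 2 a‖ * ‖toLp 2 e‖) := by
          simp only [specNorm_vecMulVec, abs_neg, abs_of_nonneg hlam]
          ring
      _ ≤ (ε * ‖toLp 2 a‖) ^ 2 + 2 * lam * (‖toLp 2 a‖ * (ε * ‖toLp 2 a‖)) := by gcongr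
      _ = _ := by ring
  rw [kalmanUpdate_sub_kalmanUpdate hA hM.isHermitian hAa hMa]
  refine (specNorm_add_le _ _).trans
    (add_le_add ((specNorm_add_le _ _).trans (add_le_add hAM ?_)) ?_)
  · rw [specNorm_smul, specNorm_smul, specNorm_vecMulVec, abs_of_nonneg (sq_nonneg lam)]
    exact le_of_eq (by ring)
  · rw [specNorm_smul, abs_of_nonneg hden, mul_assoc]
    exact mul_le_mul_of_nonneg_left hrank1 hden

lemma Matrix.PosSemidef.trace_pos_of_rank_ne_zero {ι : Type*} [Fintype ι] {M : Matrix ι ι ℝ}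
    (hM : M.PosSemidef) (hr : M.rank ≠ 0) : 0 < M.trace :=
  hM.trace_nonneg.lt_of_ne' fun h0 => hr (by rw [hM.trace_eq_zero_iff.1 h0, rank_zero])

section Spectrum

variable {ι : Type*} [Fintype ι] [DecidableEq ι] {M : Matrix ι ι ℝ}

lemma Matrix.IsHermitian.eigenvalues_le {μ : ℝ} (hM : M.IsHermitian)
    (h : ∀ v, v ⬝ᵥ M *ᵥ v ≤ μ * (v ⬝ᵥ v)) (i : ι) : hM.eigenvalues i ≤ μ := by
  set v := hM.eigenvectorBasis i
  have hv : ofLp v ⬝ᵥ ofLp v = 1 := by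
    rw [← norm_toLp_sq, toLp_ofLp, hM.eigenvectorBasis.orthonormal.1 i, one_pow]
  simpa [hM.eigenvalues_eq i, hv] using h (ofLp v)

lemma Matrix.IsHermitian.trace_le_rank_mul {μ : ℝ} (hM : M.IsHermitian)
    (h : ∀ v, v ⬝ᵥ M *ᵥ v ≤ μ * (v ⬝ᵥ v)) : M.trace ≤ M.rank * μ := by
  rw [hM.trace_eq_sum_eigenvalues, hM.rank_eq_card_non_zero_eigs, Fintype.card_subtype,
    ← Finset.sum_filter_ne_zero]
  simpa using Finset.sum_le_card_nsmul _ _ _ fun i _ => hM.eigenvalues_le h i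

lemma Matrix.PosSemidef.prod_nonzero_eigenvalues_le_trace_pow (hM : M.PosSemidef) :
    ∏ i ∈ Finset.univ.filter (fun i => hM.1.eigenvalues i ≠ 0), hM.1.eigenvalues i
      ≤ M.trace ^ M.rank := by
  have hle (i : ι) : hM.1.eigenvalues i ≤ M.trace := by
    rw [hM.1.trace_eq_sum_eigenvalues]
    simpa using Finset.single_le_sum (fun j _ => hM.eigenvalues_nonneg j) (Finset.mem_univ i)
  rw [hM.1.rank_eq_card_non_zero_eigs, Fintype.card_subtype, ← Finset.prod_const]
  exact Finset.prod_le_prod (fun i _ => hM.eigenvalues_nonneg i) fun i _ => hle i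

lemma Matrix.PosSemidef.log_entropy_le {T : ℝ} (hM : M.PosSemidef) (hT : M.trace ≤ T)
    (hT0 : 0 < T) :
    Real.log ((2 * Real.pi * Real.exp 1) ^ ((M.rank : ℝ) / 2) *
        √(∏ i ∈ Finset.univ.filter (fun i => hM.1.eigenvalues i ≠ 0), hM.1.eigenvalues i))
      ≤ (M.rank : ℝ) / 2 * Real.log (2 * Real.pi * Real.exp 1 * T) := by
  set P := ∏ i ∈ Finset.univ.filter (fun i => hM.1.eigenvalues i ≠ 0), hM.1.eigenvalues i
  have hP : 0 < P := Finset.prod_pos fun i hi =>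
    (hM.eigenvalues_nonneg i).lt_of_ne' (Finset.mem_filter.1 hi).2
  have hlog : Real.log P ≤ M.rank * Real.log T := by
    rw [← Real.log_pow]
    exact Real.log_le_log hP
      (hM.prod_nonzero_eigenvalues_le_trace_pow.trans (pow_le_pow_left₀ hM.trace_nonneg hT _))
  rw [Real.log_mul (by positivity) (by positivity), Real.log_rpow (by positivity),
    Real.log_sqrt hP.le, Real.log_mul (by positivity) hT0.ne']
  linarith

end Spectrum

lemma log_prod_mul_eq_sub_sum_log_one_div {ι : Type*} {I : Finset ι} {f : ι → ℝ}
    (hf : ∀ j ∈ I, f j ≠ 0) {x : ℝ} (hx : x ≠ 0) :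
    Real.log ((∏ j ∈ I, f j) * x) = Real.log x - ∑ j ∈ I, Real.log (1 / f j) := by
  rw [Real.log_mul (Finset.prod_ne_zero_iff.2 hf) hx, Real.log_prod hf]
  simp only [one_div, Real.log_inv, Finset.sum_neg_distrib]
  ring

lemma four_pow_mul_le_div_sixteen {k K : ℕ} (hk : k + 1 ≤ K) {x : ℝ} (hx : 0 ≤ x) :
    4 ^ k * (x / 4 ^ (K + 1)) ≤ x / 16 := by
  have h16 : (4 : ℝ) ^ k * 16 ≤ 4 ^ (K + 1) := by
    rw [show (4 : ℝ) ^ k * 16 = 4 ^ (k + 2) by ring]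
    exact pow_le_pow_right₀ (by norm_num) (by omega)
  calc 4 ^ k * (x / 4 ^ (K + 1)) ≤ 4 ^ k * (x / (4 ^ k * 16)) := by gcongr
    _ = x / 16 := by field_simp

noncomputable def infoGreedyPower (σ χ lam : ℝ) : ℝ := σ ^ 2 * (1 / χ - 1 / lam)

section InfoGreedyPower

variable {σ χ lam : ℝ}

lemma infoGreedyPower_pos (hσ : 0 < σ) (hχ : 0 < χ) (hχlam : χ < lam) :
    0 < infoGreedyPower σ χ lam := by
  have := one_div_lt_one_div_of_lt hχ hχlam
  unfold infoGreedyPower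
  apply mul_pos (by positivity)
  linarith

lemma infoGreedyPower_mul_le (hχ : 0 < χ) (hχlam : χ < lam) :
    infoGreedyPower σ χ lam * χ ≤ σ ^ 2 := by
  have hlam : 0 < lam := hχ.trans hχlam
  have : infoGreedyPower σ χ lam * χ = σ ^ 2 - σ ^ 2 * (χ / lam) := by
    unfold infoGreedyPower
    field_simp
  rw [this]
  have : 0 ≤ σ ^ 2 * (χ / lam) := by positivity
  linarith

lemma infoGreedyPower_mul_sq (hχ : χ ≠ 0) (hlam : lam ≠ 0) :
    infoGreedyPower σ χ lam * lam ^ 2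
      = (lam - χ) * (infoGreedyPower σ χ lam * lam + σ ^ 2) := by
  unfold infoGreedyPower
  field_simp
  ring

lemma infoGreedy_perturbation_le {ε q : ℝ} (hσ : 0 < σ) (hχ : 0 < χ) (hχlam : χ < lam)
    (hε : 0 ≤ ε) (hεχ : ε ≤ χ)
    (hq : |infoGreedyPower σ χ lam * lam - q| ≤ infoGreedyPower σ χ lam * ε) :
    ε + |(q + σ ^ 2)⁻¹ - (infoGreedyPower σ χ lam * lam + σ ^ 2)⁻¹| * lam ^ 2
        * infoGreedyPower σ χ lam
      + (q + σ ^ 2)⁻¹ * (2 * lam * ε + ε ^ 2) * infoGreedyPower σ χ lam ≤ 4 * ε := by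
  have hlam : 0 < lam := hχ.trans hχlam
  have hsq := infoGreedyPower_mul_sq (σ := σ) hχ.ne' hlam.ne'
  have hbχ := infoGreedyPower_mul_le (σ := σ) hχ hχlam
  set b := infoGreedyPower σ χ lam
  have hb : 0 < b := infoGreedyPower_pos hσ hχ hχlam
  have hqlo : b * lam - b * ε ≤ q := by linarith [(abs_le.1 hq).2]
  have hD1 : 0 < q + σ ^ 2 := by nlinarith
  have hD2 : 0 < b * lam + σ ^ 2 := by positivity
  have hinv : |(q + σ ^ 2)⁻¹ - (b * lam + σ ^ 2)⁻¹| * lam ^ 2 * b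
      ≤ b * ε * (lam - χ) / (q + σ ^ 2) := by
    rw [inv_sub_inv hD1.ne' hD2.ne', abs_div, abs_of_pos (mul_pos hD1 hD2),
      show b * lam + σ ^ 2 - (q + σ ^ 2) = b * lam - q by ring]
    calc |b * lam - q| / ((q + σ ^ 2) * (b * lam + σ ^ 2)) * lam ^ 2 * b
        ≤ b * ε / ((q + σ ^ 2) * (b * lam + σ ^ 2)) * lam ^ 2 * b := by gcongr
      _ = b * ε * (b * lam ^ 2) / ((q + σ ^ 2) * (b * lam + σ ^ 2)) := by ring
      _ = b * ε * (lam - χ) / (q + σ ^ 2) := by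
          rw [hsq]
          field_simp
  have hrest : b * ε * (lam - χ) / (q + σ ^ 2) + (q + σ ^ 2)⁻¹ * (2 * lam * ε + ε ^ 2) * b
      ≤ 3 * ε := by
    have key : b * (3 * lam - χ + ε) ≤ 3 * (q + σ ^ 2) := by
      nlinarith [mul_le_mul_of_nonneg_left hεχ hb.le]
    rw [inv_mul_eq_div, div_mul_eq_mul_div, ← add_div, div_le_iff₀ hD1]
    nlinarith [mul_le_mul_of_nonneg_left key hε]
  linarith

lemma infoGreedy_trace_le {δ ε q s T : ℝ} (hσ : 0 < σ) (hχ : 0 < χ) (hχlam : χ < lam)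
    (hδ : δ ∈ Set.Ioo 0 1) (hε : 0 ≤ ε) (hεδ : ε ≤ δ * χ / 16)
    (hq : infoGreedyPower σ χ lam * (lam - ε) ≤ q) (hs : 0 < s) (hT : T ≤ s * (lam + ε)) :
    (1 - δ) / s * (infoGreedyPower σ χ lam * lam / (infoGreedyPower σ χ lam * lam + σ ^ 2)) * T
      ≤ (q + σ ^ 2)⁻¹ * (q ^ 2 / infoGreedyPower σ χ lam) := by
  have hlam : 0 < lam := hχ.trans hχlam
  have hb : 0 < infoGreedyPower σ χ lam := infoGreedyPower_pos hσ hχ hχlam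
  set b := infoGreedyPower σ χ lam
  obtain ⟨hδ0, hδ1⟩ := hδ
  have hεlam : ε ≤ δ * lam / 16 := hεδ.trans (by gcongr)
  have hεlam' : ε < lam := by nlinarith
  have hx : 0 < b * (lam - ε) := mul_pos hb (by linarith)
  have key : (1 - δ) * (lam + ε) * lam ≤ (lam - ε) ^ 2 := by
    nlinarith [mul_le_mul_of_nonneg_left hεlam hlam.le, mul_pos hδ0 hlam]
  calc (1 - δ) / s * (b * lam / (b * lam + σ ^ 2)) * T
      ≤ (1 - δ) / s * (b * lam / (b * lam + σ ^ 2)) * (s * (lam + ε)) := by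
        gcongr
    _ = b * ((1 - δ) * (lam + ε) * lam) / (b * lam + σ ^ 2) := by
        field_simp
    _ ≤ b * (lam - ε) ^ 2 / (b * lam + σ ^ 2) := by gcongr
    _ ≤ b * (lam - ε) ^ 2 / (b * (lam - ε) + σ ^ 2) := by
        gcongr
        linarith
    _ = (b * (lam - ε) + σ ^ 2)⁻¹ * ((b * (lam - ε)) ^ 2 / b) := by
        field_simp
    _ ≤ (q + σ ^ 2)⁻¹ * (q ^ 2 / b) := by
        rw [inv_mul_eq_div, inv_mul_eq_div, div_div, div_div,
          div_le_div_iff₀ (by positivity) (by nlinarith)]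
        have hmono : (b * (lam - ε)) ^ 2 * (q + σ ^ 2) ≤ q ^ 2 * (b * (lam - ε) + σ ^ 2) := by
          nlinarith [mul_nonneg (mul_nonneg hx.le (hx.le.trans hq)) (sub_nonneg.2 hq),
            mul_nonneg (sq_nonneg σ) (mul_nonneg (sub_nonneg.2 hq) (add_pos hx (hx.trans_le hq)).le)]
        nlinarith [mul_le_mul_of_nonneg_left hmono hb.le]

lemma infoGreedy_contraction_mem_Ioo {δ : ℝ} {s : ℕ} (hσ : 0 < σ) (hχ : 0 < χ) (hχlam : χ < lam)
    (hδ : δ ∈ Set.Ioo 0 1) (hs : 1 ≤ s) :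
    1 - (1 - δ) / s * (infoGreedyPower σ χ lam * lam / (infoGreedyPower σ χ lam * lam + σ ^ 2))
      ∈ Set.Ioo 0 1 := by
  obtain ⟨hδ0, hδ1⟩ := hδ
  have hsR : (1 : ℝ) ≤ s := by exact_mod_cast hs
  have hb : 0 < infoGreedyPower σ χ lam * lam :=
    mul_pos (infoGreedyPower_pos hσ hχ hχlam) (hχ.trans hχlam)
  set r := infoGreedyPower σ χ lam * lam / (infoGreedyPower σ χ lam * lam + σ ^ 2)
  have hr0 : 0 < r := by positivity
  have hr1 : r < 1 := (div_lt_one (by positivity)).2 (by linarith [pow_pos hσ 2])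
  have hd0 : 0 < (1 - δ) / s := div_pos (by linarith) (by linarith)
  have hd1 : (1 - δ) / s ≤ 1 := (div_le_one (by linarith)).2 (by linarith)
  constructor
  · linarith [mul_lt_one_of_nonneg_of_lt_one_right hd1 hr0.le hr1]
  · linarith [mul_pos hd0 hr0]

end InfoGreedyPower

section EigenDirection

variable {ι : Type*} [Fintype ι] {A : Matrix ι ι ℝ} {u : ι → ℝ} {lam b : ℝ}

lemma sqrt_smul_dotProduct_self (hu : u ⬝ᵥ u = 1) (hb : 0 ≤ b) : (√b • u) ⬝ᵥ (√b • u) = b := by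
  rw [smul_dotProduct, dotProduct_smul, hu, smul_eq_mul, smul_eq_mul, mul_one,
    Real.mul_self_sqrt hb]

lemma mulVec_sqrt_smul (hAu : A *ᵥ u = lam • u) : A *ᵥ (√b • u) = lam • (√b • u) := by
  rw [mulVec_smul, hAu, smul_comm]

lemma sqrt_smul_dotProduct_mulVec (hu : u ⬝ᵥ u = 1) (hAu : A *ᵥ u = lam • u) (hb : 0 ≤ b) :
    (√b • u) ⬝ᵥ A *ᵥ (√b • u) = b * lam := by
  rw [mulVec_sqrt_smul hAu, dotProduct_smul, sqrt_smul_dotProduct_self hu hb, smul_eq_mul, mul_comm]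

lemma kalmanUpdate_sqrt_smul (hu : u ⬝ᵥ u = 1) (hAu : A *ᵥ u = lam • u) (hb : 0 ≤ b) (c : ℝ) :
    kalmanUpdate A (√b • u) c
      = A - (b * lam + c)⁻¹ • vecMulVec (A *ᵥ (√b • u)) ((√b • u) ᵥ* A) := by
  rw [kalmanUpdate, sqrt_smul_dotProduct_mulVec hu hAu hb]

end EigenDirection

/-- `A` and `M` stand for the assumed and the true covariance `Σ̂_k` and `Σ_k`. -/
structure MismatchBound {n : ℕ} (s : ℕ) (A M : Matrix (Fin n) (Fin n) ℝ) (ε T : ℝ) : Prop where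
  isHermitian : A.IsHermitian
  posSemidef : M.PosSemidef
  rank_eq : M.rank = s
  specNorm_sub_le : specNorm (A - M) ≤ ε
  trace_le : M.trace ≤ T

namespace MismatchBound

variable {n s : ℕ} {A M : Matrix (Fin n) (Fin n) ℝ} {ε T σ χ δ lam : ℝ} {u : Fin n → ℝ}

lemma abs_dotProduct_mulVec_sub_le (h : MismatchBound s A M ε T) (x : Fin n → ℝ) :
    |x ⬝ᵥ A *ᵥ x - x ⬝ᵥ M *ᵥ x| ≤ ε * (x ⬝ᵥ x) := by
  rw [← dotProduct_sub, ← sub_mulVec, ← norm_toLp_sq]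
  exact (abs_dotProduct_mulVec_le_specNorm _ x).trans (by gcongr; exact h.specNorm_sub_le)

lemma trace_infoGreedyStep_le (h : MismatchBound s A M ε T) (hs : 1 ≤ s) (hσ : 0 < σ)
    (hχ : 0 < χ) (hδ : δ ∈ Set.Ioo 0 1) (hεδ : ε ≤ δ * χ / 16) (hu : u ⬝ᵥ u = 1)
    (hAu : A *ᵥ u = lam • u) (hmax : ∀ v, v ⬝ᵥ A *ᵥ v ≤ lam * (v ⬝ᵥ v)) (hχlam : χ < lam) :
    let b := infoGreedyPower σ χ lam
    (kalmanUpdate M (√b • u) (σ ^ 2)).trace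
      ≤ (1 - (1 - δ) / s * (b * lam / (b * lam + σ ^ 2))) * M.trace := by
  intro b
  have hb : 0 < b := infoGreedyPower_pos hσ hχ hχlam
  have haa := sqrt_smul_dotProduct_self hu hb.le
  have hAa := sqrt_smul_dotProduct_mulVec hu hAu hb.le
  set a := √b • u
  have hMmax (v : Fin n → ℝ) : v ⬝ᵥ M *ᵥ v ≤ (lam + ε) * (v ⬝ᵥ v) := by
    linarith [hmax v, (abs_le.1 (h.abs_dotProduct_mulVec_sub_le v)).1]
  have htrM : M.trace ≤ s * (lam + ε) := h.rank_eq ▸ h.posSemidef.1.trace_le_rank_mul hMmax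
  have hq : b * (lam - ε) ≤ a ⬝ᵥ M *ᵥ a := by
    have := (abs_le.1 (h.abs_dotProduct_mulVec_sub_le a)).2
    rw [hAa, haa] at this
    linarith
  have hcs : (a ⬝ᵥ M *ᵥ a) ^ 2 / b ≤ (M *ᵥ a) ⬝ᵥ (M *ᵥ a) := by
    rw [div_le_iff₀ hb, mul_comm, ← haa]
    exact dotProduct_sq_le a (M *ᵥ a)
  have hden : 0 ≤ (a ⬝ᵥ M *ᵥ a + σ ^ 2)⁻¹ := by
    have := h.posSemidef.dotProduct_mulVec_nonneg a
    positivity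
  have hscalar := infoGreedy_trace_le hσ hχ hχlam hδ ((norm_nonneg _).trans h.specNorm_sub_le)
    hεδ hq (by positivity : (0 : ℝ) < s) htrM
  rw [trace_kalmanUpdate h.posSemidef.1]
  linarith [mul_le_mul_of_nonneg_left hcs hden]

lemma specNorm_infoGreedyStep_le (h : MismatchBound s A M ε T) (hσ : 0 < σ) (hχ : 0 < χ)
    (hεχ : ε ≤ χ) (hu : u ⬝ᵥ u = 1) (hAu : A *ᵥ u = lam • u) (hχlam : χ < lam) :
    let b := infoGreedyPower σ χ lam
    specNorm (kalmanUpdate A (√b • u) (σ ^ 2) - kalmanUpdate M (√b • u) (σ ^ 2)) ≤ 4 * ε := by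
  intro b
  have hb : 0 < b := infoGreedyPower_pos hσ hχ hχlam
  have haa := sqrt_smul_dotProduct_self hu hb.le
  have hAa := sqrt_smul_dotProduct_mulVec hu hAu hb.le
  have hq := h.abs_dotProduct_mulVec_sub_le (√b • u)
  rw [hAa, haa, mul_comm ε] at hq
  refine (specNorm_kalmanUpdate_sub_le h.isHermitian h.posSemidef (mulVec_sqrt_smul hAu)
    (hχ.trans hχlam).le (sq_nonneg σ) h.specNorm_sub_le).trans ?_
  rw [norm_toLp_sq, haa, hAa]
  exact infoGreedy_perturbation_le hσ hχ hχlam ((norm_nonneg _).trans h.specNorm_sub_le) hεχ hq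

theorem infoGreedyStep (h : MismatchBound s A M ε T) (hs : 1 ≤ s) (hσ : 0 < σ)
    (hχ : 0 < χ) (hδ : δ ∈ Set.Ioo 0 1) (hεδ : ε ≤ δ * χ / 16) (hu : u ⬝ᵥ u = 1)
    (hAu : A *ᵥ u = lam • u) (hmax : ∀ v, v ⬝ᵥ A *ᵥ v ≤ lam * (v ⬝ᵥ v)) (hχlam : χ < lam) :
    let b := infoGreedyPower σ χ lam
    MismatchBound s (kalmanUpdate A (√b • u) (σ ^ 2)) (kalmanUpdate M (√b • u) (σ ^ 2))
      (4 * ε) ((1 - (1 - δ) / s * (b * lam / (b * lam + σ ^ 2))) * T) where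
  isHermitian := isHermitian_kalmanUpdate h.isHermitian
  posSemidef := posSemidef_kalmanUpdate h.posSemidef (by positivity)
  rank_eq := (rank_kalmanUpdate h.posSemidef (by positivity)).trans h.rank_eq
  specNorm_sub_le := h.specNorm_infoGreedyStep_le hσ hχ
    (hεδ.trans (by nlinarith [hδ.2])) hu hAu hχlam
  trace_le := (h.trace_infoGreedyStep_le hs hσ hχ hδ hεδ hu hAu hmax hχlam).trans
    (mul_le_mul_of_nonneg_left h.trace_le (infoGreedy_contraction_mem_Ioo hσ hχ hχlam hδ hs).1.le)

end MismatchBound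

/-- Entropy of the estimator under covariance mismatch. If the initial
mismatch satisfies `‖Σ̂ − Σ‖ ≤ (δ/4^{K+1})·χ`, then each true posterior covariance `Σ_k`
has rank `s`, each `f_j` lies in `(0,1)`, and the posterior entropy
`ln[(2πe)^{s/2}·Vol(Σ_k)]` (with `Vol` the square root of the product of the positive
eigenvalues) is at most `(s/2)·(ln(2πe·tr Σ) − ∑_{j≤k} ln(1/f_j))`. -/
theorem stmt4 {n s K : ℕ} (hs : 1 ≤ s)
    (σ χ δ : ℝ) (hσ : 0 < σ) (hχ : 0 < χ) (hδ : δ ∈ Set.Ioo (0 : ℝ) 1)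
    (S Shat : Matrix (Fin n) (Fin n) ℝ) (hS : S.PosSemidef) (hShat : Shat.PosSemidef)
    (hrank : S.rank = s)
    -- algorithm data: at step k+1 we use the largest eigenpair of `Shatseq k`
    (lamhat : ℕ → ℝ) (uhat : ℕ → Fin n → ℝ) (β : ℕ → ℝ) (a : ℕ → Fin n → ℝ)
    (Shatseq Sseq : ℕ → Matrix (Fin n) (Fin n) ℝ)
    (hShat0 : Shatseq 0 = Shat) (hS0 : Sseq 0 = S)
    (hunit : ∀ k, uhat k ⬝ᵥ uhat k = 1)
    (heig : ∀ k (_ : k < K),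
      (Shatseq k).mulVec (uhat (k + 1)) = lamhat (k + 1) • uhat (k + 1))
    (hmax : ∀ k (_ : k < K), ∀ v : Fin n → ℝ,
      v ⬝ᵥ (Shatseq k).mulVec v ≤ lamhat (k + 1) * (v ⬝ᵥ v))
    (hlamχ : ∀ k (_ : k < K), χ < lamhat (k + 1))
    (hβ : ∀ k (_ : k < K), β (k + 1) = σ ^ 2 * (1 / χ - 1 / lamhat (k + 1)))
    (ha : ∀ k, a k = Real.sqrt (β k) • uhat k)
    (hShatrec : ∀ k (_ : k < K), Shatseq (k + 1) = Shatseq k -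
      (β (k + 1) * lamhat (k + 1) + σ ^ 2)⁻¹ •
        Matrix.vecMulVec ((Shatseq k).mulVec (a (k + 1))) ((a (k + 1)) ᵥ* Shatseq k))
    (hSrec : ∀ k (_ : k < K), Sseq (k + 1) = Sseq k -
      (a (k + 1) ⬝ᵥ (Sseq k).mulVec (a (k + 1)) + σ ^ 2)⁻¹ •
        Matrix.vecMulVec ((Sseq k).mulVec (a (k + 1))) ((a (k + 1)) ᵥ* Sseq k))
    -- small initial mismatch
    (hmismatch : specNorm (Shat - S) ≤ (δ / 4 ^ (K + 1)) * χ)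
    -- the contraction factors
    (f : ℕ → ℝ)
    (hf : ∀ j, f j = 1 - ((1 - δ) / s) *
      (β j * lamhat j / (β j * lamhat j + σ ^ 2))) :
    (∀ j, 1 ≤ j → j ≤ K → f j ∈ Set.Ioo (0 : ℝ) 1) ∧
    ∀ k, 1 ≤ k → k ≤ K →
      (Sseq k).rank = s ∧
      ∀ (hk : (Sseq k).IsHermitian),
        Real.log ((2 * Real.pi * Real.exp 1) ^ ((s : ℝ) / 2) *
            Real.sqrt (∏ i ∈ Finset.univ.filter (fun i => hk.eigenvalues i ≠ 0),
              hk.eigenvalues i))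
          ≤ ((s : ℝ) / 2) *
            (Real.log (2 * Real.pi * Real.exp 1 * S.trace)
              - ∑ j ∈ Finset.Icc 1 k, Real.log (1 / f j)) := by
  have hf_mem : ∀ j, 1 ≤ j → j ≤ K → f j ∈ Set.Ioo (0 : ℝ) 1 := by
    rintro (_ | j) hj hjK
    · omega
    rw [hf, hβ j hjK]
    exact infoGreedy_contraction_mem_Ioo hσ hχ (hlamχ j hjK) hδ hs
  refine ⟨hf_mem, ?_⟩
  have hbound : ∀ k ≤ K, MismatchBound s (Shatseq k) (Sseq k)
      (4 ^ k * (δ / 4 ^ (K + 1) * χ)) ((∏ j ∈ Finset.Icc 1 k, f j) * S.trace) := by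
    intro k
    induction k with
    | zero =>
      intro _
      subst hShat0 hS0
      exact ⟨hShat.1, hS, hrank, by simpa using hmismatch, by simp⟩
    | succ k ih =>
      intro hk
      have hε : 4 ^ k * (δ / 4 ^ (K + 1) * χ) ≤ δ * χ / 16 := by
        rw [div_mul_eq_mul_div]
        exact four_pow_mul_le_div_sixteen hk (mul_nonneg hδ.1.le hχ.le)
      have hβk : β (k + 1) = infoGreedyPower σ χ (lamhat (k + 1)) := hβ k hk
      have hSk : Sseq (k + 1) = kalmanUpdate (Sseq k) (a (k + 1)) (σ ^ 2) := hSrec k hk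
      rw [hShatrec k hk, hSk, ha, hβk, ← kalmanUpdate_sqrt_smul (hunit _) (heig k hk)
        (infoGreedyPower_pos hσ hχ (hlamχ k hk)).le, Finset.prod_Icc_succ_top (by omega), hf, hβk]
      convert (ih (by omega)).infoGreedyStep hs hσ hχ hδ hε (hunit _) (heig k hk)
        (hmax k hk) (hlamχ k hk) using 1 <;> ring
  intro k hk1 hkK
  have h := hbound k hkK
  have hf_pos : ∀ j ∈ Finset.Icc 1 k, 0 < f j := fun j hj =>
    (hf_mem j (Finset.mem_Icc.1 hj).1 ((Finset.mem_Icc.1 hj).2.trans hkK)).1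
  have htrS : 0 < S.trace := hS.trace_pos_of_rank_ne_zero (by omega)
  refine ⟨h.rank_eq, fun _ => ?_⟩
  rw [← log_prod_mul_eq_sub_sum_log_one_div (fun j hj => (hf_pos j hj).ne') (by positivity),
    mul_left_comm, ← h.rank_eq]
  exact h.posSemidef.log_entropy_le h.trace_le (mul_pos (Finset.prod_pos hf_pos) htrS)
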